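/- arXiv:1501.01715 — 2 statements merged into one kernel-verified Lean document; each statement's English description precedes it below -/
import Mathlib

section
/- The rank-at-most-two Hermitian operator D = U|ψ⟩⟨ψ|U† − V|ψ⟩⟨ψ|V† (for operators U, V on a finite-dimensional complex inner product space and a unit vector ψ) has trace norm ‖D‖₁ = √((⟨ψ|U†U|ψ⟩ + ⟨ψ|V†V|ψ⟩)² − 4|⟨ψ|V†U|ψ⟩|²). -/
/-!
Write `u = Uψ`, `v = Vψ` and `D = u u* - v v*`. Since `D` has rank at most two, it has at most two
nonzero eigenvalues `λ₁, λ₂`, and these are pinned down by `λ₁ + λ₂ = tr D = ‖u‖² - ‖v‖²` and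
`λ₁² + λ₂² = tr D² = ‖u‖⁴ + ‖v‖⁴ - 2 |⟨v, u⟩|²`. Cauchy–Schwarz gives `(λ₁ + λ₂)² ≤ λ₁² + λ₂²`,
i.e. `λ₁ λ₂ ≤ 0`, hence `(|λ₁| + |λ₂|)² = 2 (λ₁² + λ₂²) - (λ₁ + λ₂)² = (‖u‖² + ‖v‖²)² - 4 |⟨v, u⟩|²`.
-/

open Matrix

/-- The trace norm of a Hermitian matrix: the sum of the absolute values of its eigenvalues. -/
noncomputable def hermTraceNorm {n : ℕ} {A : Matrix (Fin n) (Fin n) ℂ}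
    (hA : A.IsHermitian) : ℝ :=
  ∑ i, |hA.eigenvalues i|

theorem sq_sum_abs_eq_of_card_le_two {ι : Type*} {s : Finset ι} (x : ι → ℝ) (hs : s.card ≤ 2)
    (hsq : (∑ i ∈ s, x i) ^ 2 ≤ ∑ i ∈ s, x i ^ 2) :
    (∑ i ∈ s, |x i|) ^ 2 = 2 * ∑ i ∈ s, x i ^ 2 - (∑ i ∈ s, x i) ^ 2 := by
  classical
  interval_cases hk : s.card
  · simp [Finset.card_eq_zero.mp hk]
  · obtain ⟨a, rfl⟩ := Finset.card_eq_one.mp hk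
    simp only [Finset.sum_singleton, sq_abs]
    ring
  · obtain ⟨a, b, hab, rfl⟩ := Finset.card_eq_two.mp hk
    simp only [Finset.sum_pair hab] at hsq ⊢
    have hopp : |x a| * |x b| = -(x a * x b) := by
      rw [← abs_mul, abs_of_nonpos (by nlinarith)]
    nlinarith [sq_abs (x a), sq_abs (x b)]

theorem sum_abs_eq_sqrt_of_card_support_le_two {ι : Type*} [Fintype ι] (x : ι → ℝ)
    (hcard : Fintype.card {i // x i ≠ 0} ≤ 2) (hsq : (∑ i, x i) ^ 2 ≤ ∑ i, x i ^ 2) :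
    ∑ i, |x i| = √(2 * ∑ i, x i ^ 2 - (∑ i, x i) ^ 2) := by
  classical
  set S := Finset.univ.filter (x · ≠ 0)
  have hzero : ∀ i ∉ S, x i = 0 := by simp [S]
  have hsum : ∑ i, x i = ∑ i ∈ S, x i :=
    (Finset.sum_subset S.subset_univ fun i _ hi ↦ hzero i hi).symm
  have hsum_sq : ∑ i, x i ^ 2 = ∑ i ∈ S, x i ^ 2 :=
    (Finset.sum_subset S.subset_univ fun i _ hi ↦ by simp [hzero i hi]).symm
  have hsum_abs : ∑ i, |x i| = ∑ i ∈ S, |x i| :=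
    (Finset.sum_subset S.subset_univ fun i _ hi ↦ by simp [hzero i hi]).symm
  rw [hsum, hsum_sq] at hsq ⊢
  rw [hsum_abs, ← sq_sum_abs_eq_of_card_le_two x (by rwa [← Fintype.card_subtype]) hsq,
    Real.sqrt_sq (Finset.sum_nonneg fun i _ ↦ abs_nonneg (x i))]

namespace Matrix

theorem rank_vecMulVec_sub_vecMulVec_le {m n R : Type*} [Fintype n] [CommRing R]
    [StrongRankCondition R] (a c : m → R) (b d : n → R) :
    (vecMulVec a b - vecMulVec c d).rank ≤ 2 := by
  have hfactor : vecMulVec a b - vecMulVec c d = (of ![a, c])ᵀ * of ![b, -d] := by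
    ext i j
    simp [mul_apply, Fin.sum_univ_two, vecMulVec_apply, sub_eq_add_neg]
  rw [hfactor]
  exact (rank_mul_le_left _ _).trans ((rank_le_card_width _).trans_eq (Fintype.card_fin 2))

theorem trace_conjStarAlgAut {n R : Type*} [Fintype n] [DecidableEq n] [CommRing R] [StarRing R]
    (u : unitary (Matrix n n R)) (A : Matrix n n R) :
    (Unitary.conjStarAlgAut R _ u A).trace = A.trace := by
  rw [Unitary.conjStarAlgAut_apply, trace_mul_cycle, Unitary.coe_star_mul_self, one_mul]

theorem IsHermitian.trace_pow {n 𝕜 : Type*} [Fintype n] [DecidableEq n] [RCLike 𝕜]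
    {A : Matrix n n 𝕜} (hA : A.IsHermitian) (k : ℕ) :
    (A ^ k).trace = ∑ i, (hA.eigenvalues i : 𝕜) ^ k := by
  conv_lhs => rw [hA.spectral_theorem]
  rw [← map_pow, trace_conjStarAlgAut, diagonal_pow, trace_diagonal]
  rfl

theorem trace_vecMulVec_mul_vecMulVec {n R : Type*} [Fintype n] [CommSemiring R]
    (a b c d : n → R) :
    (vecMulVec a b * vecMulVec c d).trace = (b ⬝ᵥ c) * (a ⬝ᵥ d) := by
  rw [vecMulVec_mul_vecMulVec, trace_vecMulVec, dotProduct_smul, smul_eq_mul]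

variable {ι 𝕜 : Type*} [Fintype ι] [RCLike 𝕜]

theorem star_dotProduct_self_eq_sum_norm_sq (u : ι → 𝕜) :
    star u ⬝ᵥ u = ((∑ i, ‖u i‖ ^ 2 : ℝ) : 𝕜) := by
  simp [dotProduct, RCLike.conj_mul]

theorem norm_star_dotProduct_sq_le (u v : ι → 𝕜) :
    ‖star v ⬝ᵥ u‖ ^ 2 ≤ (∑ i, ‖v i‖ ^ 2) * ∑ i, ‖u i‖ ^ 2 := by
  calc ‖star v ⬝ᵥ u‖ ^ 2 ≤ (∑ i, ‖v i‖ * ‖u i‖) ^ 2 := by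
        gcongr
        refine (norm_sum_le _ _).trans_eq ?_
        simp
    _ ≤ _ := Finset.sum_mul_sq_le_sq_mul_sq _ _ _

theorem trace_vecMulVec_star_sub (u v : ι → 𝕜) :
    (vecMulVec u (star u) - vecMulVec v (star v)).trace
      = ((∑ i, ‖u i‖ ^ 2 - ∑ i, ‖v i‖ ^ 2 : ℝ) : 𝕜) := by
  rw [trace_sub, trace_vecMulVec, trace_vecMulVec, dotProduct_comm u, dotProduct_comm v,
    star_dotProduct_self_eq_sum_norm_sq, star_dotProduct_self_eq_sum_norm_sq]
  push_cast; ring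

theorem trace_sq_vecMulVec_star_sub [DecidableEq ι] (u v : ι → 𝕜) :
    ((vecMulVec u (star u) - vecMulVec v (star v)) ^ 2).trace
      = (((∑ i, ‖u i‖ ^ 2) ^ 2 + (∑ i, ‖v i‖ ^ 2) ^ 2 - 2 * ‖star v ⬝ᵥ u‖ ^ 2 : ℝ) : 𝕜) := by
  have hconj : star (star v ⬝ᵥ u) * (star v ⬝ᵥ u) = ((‖star v ⬝ᵥ u‖ ^ 2 : ℝ) : 𝕜) := by
    rw [RCLike.star_def, RCLike.conj_mul]; push_cast; rfl
  rw [sq, sub_mul, mul_sub, mul_sub, trace_sub, trace_sub, trace_sub,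
    trace_vecMulVec_mul_vecMulVec, trace_vecMulVec_mul_vecMulVec, trace_vecMulVec_mul_vecMulVec,
    trace_vecMulVec_mul_vecMulVec, dotProduct_comm u (star u), dotProduct_comm v (star v),
    dotProduct_comm u (star v), dotProduct_comm v (star u), star_dotProduct u v,
    star_dotProduct_self_eq_sum_norm_sq, star_dotProduct_self_eq_sum_norm_sq,
    mul_comm (star v ⬝ᵥ u), hconj]
  push_cast; ring

theorem IsHermitian.sum_abs_eigenvalues_vecMulVec_star_sub [DecidableEq ι] {u v : ι → 𝕜}
    (hD : (vecMulVec u (star u) - vecMulVec v (star v)).IsHermitian) :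
    ∑ i, |hD.eigenvalues i|
      = √((∑ i, ‖u i‖ ^ 2 + ∑ i, ‖v i‖ ^ 2) ^ 2 - 4 * ‖star v ⬝ᵥ u‖ ^ 2) := by
  have hsum : ∑ i, hD.eigenvalues i = ∑ i, ‖u i‖ ^ 2 - ∑ i, ‖v i‖ ^ 2 := by
    exact_mod_cast hD.trace_eq_sum_eigenvalues.symm.trans (trace_vecMulVec_star_sub u v)
  have hsum_sq : ∑ i, hD.eigenvalues i ^ 2
      = (∑ i, ‖u i‖ ^ 2) ^ 2 + (∑ i, ‖v i‖ ^ 2) ^ 2 - 2 * ‖star v ⬝ᵥ u‖ ^ 2 := by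
    exact_mod_cast (hD.trace_pow 2).symm.trans (trace_sq_vecMulVec_star_sub u v)
  have hcard : Fintype.card {i // hD.eigenvalues i ≠ 0} ≤ 2 :=
    hD.rank_eq_card_non_zero_eigs ▸ rank_vecMulVec_sub_vecMulVec_le _ _ _ _
  have hcs := norm_star_dotProduct_sq_le u v
  rw [sum_abs_eq_sqrt_of_card_support_le_two _ hcard (by rw [hsum, hsum_sq]; nlinarith),
    hsum, hsum_sq]
  congr 1
  ring

end Matrix

theorem trace_norm_rank_two_general (n : ℕ) (U V : Matrix (Fin n) (Fin n) ℂ)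
    (ψ : Fin n → ℂ)
    (hD : (Matrix.vecMulVec (U.mulVec ψ) (star (U.mulVec ψ))
        - Matrix.vecMulVec (V.mulVec ψ) (star (V.mulVec ψ))).IsHermitian) :
    hermTraceNorm hD =
      Real.sqrt (((∑ i, ‖U.mulVec ψ i‖ ^ 2) + ∑ i, ‖V.mulVec ψ i‖ ^ 2) ^ 2
        - 4 * ‖star (V.mulVec ψ) ⬝ᵥ U.mulVec ψ‖ ^ 2) :=
  hD.sum_abs_eigenvalues_vecMulVec_star_sub

theorem trace_norm_rank_two (n : ℕ) (U V : Matrix (Fin n) (Fin n) ℂ)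
    (ψ : Fin n → ℂ) (hψ : ∑ i, ‖ψ i‖ ^ 2 = 1)
    (hD : (Matrix.vecMulVec (U.mulVec ψ) (star (U.mulVec ψ))
        - Matrix.vecMulVec (V.mulVec ψ) (star (V.mulVec ψ))).IsHermitian) :
    hermTraceNorm hD =
      Real.sqrt (((∑ i, ‖U.mulVec ψ i‖ ^ 2) + ∑ i, ‖V.mulVec ψ i‖ ^ 2) ^ 2
        - 4 * ‖star (V.mulVec ψ) ⬝ᵥ U.mulVec ψ‖ ^ 2) :=
  trace_norm_rank_two_general n U V ψ hD
end

section
/- Let V, V₁, …, V_r and U be operators on a finite-dimensional complex inner product space with U unitary, ‖V‖ ≤ 1, and V†V + Σ_j V_j†V_j = I. Then for every density operator ρ (positive semidefinite with trace 1), Tr(Σ_j V_j ρ V_j†) ≤ 2‖U − V‖, where ‖·‖ is the operator norm. -/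
/-!
By cyclicity of the trace and completeness of the Kraus family, the residual weight equals
`Tr((1 - V†V) ρ)`. A Hermitian `A` satisfies `A ≤ ‖A‖ • 1` in the Loewner order, so this is at
most `‖1 - V†V‖`, and the splitting `1 - V†V = U†(U - V) + (U - V)†V` bounds that norm by
`2 ‖U - V‖`.
-/

open Matrix
open scoped ComplexOrder
open scoped Matrix.Norms.L2Operator

theorem CStarRing.norm_one_sub_star_mul_self_le {E : Type*} [NormedRing E] [StarRing E]
    [CStarRing E] {u b : E} (hu : u ∈ unitary E) (hb : ‖b‖ ≤ 1) :
    ‖1 - star b * b‖ ≤ 2 * ‖u - b‖ := by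
  have hsplit : 1 - star b * b = star u * (u - b) + star (u - b) * b := by
    rw [star_sub, mul_sub, sub_mul, Unitary.star_mul_self_of_mem hu]
    abel
  calc ‖1 - star b * b‖ ≤ ‖star u * (u - b)‖ + ‖star (u - b) * b‖ := hsplit ▸ norm_add_le _ _
    _ ≤ ‖u - b‖ + ‖u - b‖ * ‖b‖ := by
      rw [CStarRing.norm_mem_unitary_mul _ (Unitary.star_mem hu), ← norm_star (u - b)]
      gcongr
      exact norm_mul_le _ _
    _ ≤ 2 * ‖u - b‖ := by nlinarith [norm_nonneg (u - b)]

namespace Matrix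

variable {n : Type*} [Fintype n]

theorem sum_trace_mul_mul_conjTranspose {ι R : Type*} [Fintype ι] [CommSemiring R] [StarRing R]
    (K : ι → Matrix n n R) (ρ : Matrix n n R) :
    ∑ j, (K j * ρ * (K j)ᴴ).trace = ((∑ j, (K j)ᴴ * K j) * ρ).trace := by
  simp_rw [Finset.sum_mul, trace_sum, trace_mul_cycle _ ρ]

open scoped MatrixOrder in
theorem PosSemidef.trace_mul_nonneg {𝕜 : Type*} [RCLike 𝕜] {A B : Matrix n n 𝕜}
    (hA : A.PosSemidef) (hB : B.PosSemidef) : 0 ≤ (A * B).trace := by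
  classical
  obtain ⟨X, rfl⟩ := CStarAlgebra.nonneg_iff_eq_star_mul_self.mp hB.nonneg
  rw [star_eq_conjTranspose, ← mul_assoc, trace_mul_cycle]
  exact (hA.mul_mul_conjTranspose_same X).trace_nonneg

open scoped MatrixOrder in
theorem IsHermitian.trace_mul_le_norm_mul_trace [DecidableEq n] {A ρ : Matrix n n ℂ}
    (hA : A.IsHermitian) (hρ : ρ.PosSemidef) : (A * ρ).trace ≤ ‖A‖ * ρ.trace := by
  have hgap : (‖A‖ • 1 - A).PosSemidef := by
    rw [← le_iff, ← Algebra.algebraMap_eq_smul_one]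
    exact hA.isSelfAdjoint.le_algebraMap_norm_self
  have := hgap.trace_mul_nonneg hρ
  rwa [sub_mul, trace_sub, smul_mul_assoc, one_mul, trace_smul, Complex.real_smul,
    sub_nonneg] at this

end Matrix

theorem kraus_residual_trace_le (n r : ℕ) (U V : Matrix (Fin n) (Fin n) ℂ)
    (Vj : Fin r → Matrix (Fin n) (Fin n) ℂ)
    (hU : Uᴴ * U = 1) (hUU : U * Uᴴ = 1) (hV : ‖V‖ ≤ 1)
    (hsum : Vᴴ * V + ∑ j, (Vj j)ᴴ * Vj j = 1)
    (ρ : Matrix (Fin n) (Fin n) ℂ) (hρ : ρ.PosSemidef) (htr : ρ.trace = 1) :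
    (∑ j, (Vj j * ρ * (Vj j)ᴴ).trace).re ≤ 2 * ‖U - V‖ := by
  have hkraus : ∑ j, (Vj j)ᴴ * Vj j = 1 - Vᴴ * V := eq_sub_of_add_eq' hsum
  have htrace_le : ((1 - Vᴴ * V) * ρ).trace ≤ ‖1 - Vᴴ * V‖ := by
    have hresidual : (1 - Vᴴ * V).IsHermitian :=
      isHermitian_one.sub (isHermitian_conjTranspose_mul_self V)
    simpa [htr] using hresidual.trace_mul_le_norm_mul_trace hρ
  calc (∑ j, (Vj j * ρ * (Vj j)ᴴ).trace).re
      = ((1 - Vᴴ * V) * ρ).trace.re := by rw [sum_trace_mul_mul_conjTranspose, hkraus]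
    _ ≤ ‖1 - Vᴴ * V‖ := (Complex.le_def.mp htrace_le).1
    _ ≤ 2 * ‖U - V‖ := CStarRing.norm_one_sub_star_mul_self_le ⟨hU, hUU⟩ hV
end
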